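/- There exist two non-isomorphic graphs of the same size whose edge-set graphs are isomorphic; specifically, C₃ and K_{1,3} both have edge-set graph K₇. -/

import Mathlib

/-
Every two edges of `C₃`, and every two edges of `K_{1,3}`, share a vertex. For such a graph any
two distinct nonempty edge sets contain distinct edges, which then meet, so its edge-set graph is
complete on its `2 ^ 3 - 1 = 7` vertices. The graphs themselves differ already in their number of
vertices.
-/

open SimpleGraph

/-- Two edges (as elements of `Sym2 V`) are adjacent in `G` if they are distinct
and share an endpoint. The *edge-set graph* of `G` has as vertices the nonempty
subsets of the edge set of `G`, two distinct subsets being adjacent iff some edge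
of one is adjacent to some edge of the other. -/
def edgeSetGraph {V : Type*} (G : SimpleGraph V) :
    SimpleGraph {A : Finset (Sym2 V) // ↑A ⊆ G.edgeSet ∧ A.Nonempty} where
  Adj A B := A ≠ B ∧ ∃ a ∈ A.1, ∃ b ∈ B.1, a ≠ b ∧ ∃ v, v ∈ a ∧ v ∈ b
  symm := ⟨by
    rintro A B ⟨hne, a, ha, b, hb, hab, v, hv1, hv2⟩
    exact ⟨hne.symm, b, hb, a, ha, hab.symm, v, hv2, hv1⟩⟩
  loopless := ⟨fun A h => h.1 rfl⟩

theorem Finset.exists_mem_mem_ne_of_ne {α : Type*} {A B : Finset α} (hA : A.Nonempty)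
    (hB : B.Nonempty) (hAB : A ≠ B) : ∃ a ∈ A, ∃ b ∈ B, a ≠ b := by
  by_contra! h
  obtain ⟨a, ha⟩ := hA
  obtain ⟨b, hb⟩ := hB
  refine hAB (Finset.ext fun x => ⟨fun hx => ?_, fun hx => ?_⟩)
  · rwa [h x hx b hb]
  · rwa [← h a ha x hx]

theorem edgeSetGraph_eq_top {V : Type*} {G : SimpleGraph V}
    (h : G.edgeSet.Pairwise fun a b => ∃ v, v ∈ a ∧ v ∈ b) : edgeSetGraph G = ⊤ := by
  ext A B
  refine ⟨fun hAB => hAB.1, fun hAB => ⟨hAB, ?_⟩⟩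
  obtain ⟨a, ha, b, hb, hab⟩ :=
    Finset.exists_mem_mem_ne_of_ne A.2.2 B.2.2 (Subtype.coe_injective.ne hAB)
  exact ⟨a, ha, b, hb, hab, h (A.2.1 ha) (B.2.1 hb) hab⟩

theorem mem_powerset_erase_empty_iff {V : Type*} (G : SimpleGraph V) [Fintype G.edgeSet]
    [DecidableEq V] (A : Finset (Sym2 V)) :
    A ∈ G.edgeFinset.powerset.erase ∅ ↔ ↑A ⊆ G.edgeSet ∧ A.Nonempty := by
  rw [Finset.mem_erase, Finset.mem_powerset, ← Finset.coe_subset, coe_edgeFinset,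
    Finset.nonempty_iff_ne_empty, and_comm]

theorem card_vertices_edgeSetGraph {V : Type*} (G : SimpleGraph V) [Finite G.edgeSet] :
    Nat.card {A : Finset (Sym2 V) // ↑A ⊆ G.edgeSet ∧ A.Nonempty} =
      2 ^ Nat.card G.edgeSet - 1 := by
  classical
  have := Fintype.ofFinite G.edgeSet
  rw [Nat.subtype_card _ (mem_powerset_erase_empty_iff G), Finset.card_erase_of_mem
    (Finset.empty_mem_powerset _), Finset.card_powerset, edgeFinset_card, Nat.card_eq_fintype_card]

theorem nonempty_edgeSetGraph_iso_top {V : Type*} {G : SimpleGraph V} [Finite G.edgeSet] {n : ℕ}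
    (hn : Nat.card G.edgeSet = n) (h : G.edgeSet.Pairwise fun a b => ∃ v, v ∈ a ∧ v ∈ b) :
    Nonempty (edgeSetGraph G ≃g (⊤ : SimpleGraph (Fin (2 ^ n - 1)))) := by
  classical
  have := Fintype.ofFinite G.edgeSet
  have : Finite {A : Finset (Sym2 V) // ↑A ⊆ G.edgeSet ∧ A.Nonempty} :=
    Finite.of_equiv _ (Equiv.subtypeEquivRight (mem_powerset_erase_empty_iff G))
  rw [edgeSetGraph_eq_top h, ← hn]
  exact ⟨Iso.completeGraph (Finite.equivFinOfCardEq (card_vertices_edgeSetGraph G))⟩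

instance {V W : Type*} : DecidableRel (completeBipartiteGraph V W).Adj := fun a b =>
  inferInstanceAs (Decidable ((a.isLeft ∧ b.isRight) ∨ (a.isRight ∧ b.isLeft)))

theorem cycleGraph_three_card_edgeSet : Nat.card (cycleGraph 3).edgeSet = 3 := by
  rw [Nat.card_eq_fintype_card, ← edgeFinset_card]; decide

theorem completeBipartiteGraph_one_three_card_edgeSet :
    Nat.card (completeBipartiteGraph (Fin 1) (Fin 3)).edgeSet = 3 := by
  rw [Nat.card_eq_fintype_card, ← edgeFinset_card]; decide

theorem cycleGraph_three_edges_meet :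
    (cycleGraph 3).edgeSet.Pairwise fun a b => ∃ v, v ∈ a ∧ v ∈ b := by
  rw [← coe_edgeFinset]; decide

theorem completeBipartiteGraph_one_three_edges_meet :
    (completeBipartiteGraph (Fin 1) (Fin 3)).edgeSet.Pairwise
      fun a b => ∃ v, v ∈ a ∧ v ∈ b := by
  rw [← coe_edgeFinset]; decide

/-- `C₃` and `K_{1,3}` are non-isomorphic graphs of the same size (3 edges)
whose edge-set graphs are isomorphic (both being `K₇`). -/
theorem stmt5 :
    Nat.card (SimpleGraph.cycleGraph 3).edgeSet =
      Nat.card (completeBipartiteGraph (Fin 1) (Fin 3)).edgeSet ∧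
    IsEmpty (SimpleGraph.cycleGraph 3 ≃g completeBipartiteGraph (Fin 1) (Fin 3)) ∧
    Nonempty (edgeSetGraph (SimpleGraph.cycleGraph 3) ≃g (⊤ : SimpleGraph (Fin 7))) ∧
    Nonempty (edgeSetGraph (completeBipartiteGraph (Fin 1) (Fin 3)) ≃g
      (⊤ : SimpleGraph (Fin 7))) := by
  refine ⟨?_, ⟨fun e => ?_⟩, ?_, ?_⟩
  · rw [cycleGraph_three_card_edgeSet, completeBipartiteGraph_one_three_card_edgeSet]
  · simpa using e.card_eq
  · exact nonempty_edgeSetGraph_iso_top cycleGraph_three_card_edgeSet cycleGraph_three_edges_meet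
  · exact nonempty_edgeSetGraph_iso_top completeBipartiteGraph_one_three_card_edgeSet
      completeBipartiteGraph_one_three_edges_meet
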